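/- For distinct α₁, α₂ ∈ ℂ, the 4-dimensional Leibniz algebras R₉(α₁) and R₉(α₂), where R₉(α) has nonzero products [e₁,e₁]=e₃, [e₁,e₂]=e₄, [e₂,e₁]=−α e₃, [e₂,e₂]=−e₄, are not isomorphic. -/
import Mathlib


/-- The bracket of `R₉(α)`: `[e₁,e₁]=e₃, [e₁,e₂]=e₄, [e₂,e₁]=−α e₃,
[e₂,e₂]=−e₄` (basis indexed `0,…,3`), other products zero. -/
def r9 (α : ℂ) (x y : Fin 4 → ℂ) : Fin 4 → ℂ :=
  ![0, 0, x 0 * y 0 - α * (x 1 * y 0), x 0 * y 1 - x 1 * y 1]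

/-- For distinct `α₁, α₂` the algebras `R₉(α₁)` and `R₉(α₂)` are not
isomorphic. -/
theorem stmt_18 (α₁ α₂ : ℂ) (h : α₁ ≠ α₂) :
    ¬ ∃ f : (Fin 4 → ℂ) ≃ₗ[ℂ] (Fin 4 → ℂ),
        ∀ x y, f (r9 α₁ x y) = r9 α₂ (f x) (f y) := by
  rintro ⟨f, hf⟩
  have h00 := hf ![1,0,0,0] ![1,0,0,0]
  have h01 := hf ![1,0,0,0] ![0,1,0,0]
  have h10 := hf ![0,1,0,0] ![1,0,0,0]
  have h11 := hf ![0,1,0,0] ![0,1,0,0]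
  have r00 : r9 α₁ ![1,0,0,0] ![1,0,0,0] = ![0,0,1,0] := by
    funext i; fin_cases i <;> simp [r9]
  have r01 : r9 α₁ ![1,0,0,0] ![0,1,0,0] = ![0,0,0,1] := by
    funext i; fin_cases i <;> simp [r9]
  have r10 : r9 α₁ ![0,1,0,0] ![1,0,0,0] = ![0,0,-α₁,0] := by
    funext i; fin_cases i <;> simp [r9]
  have r11 : r9 α₁ ![0,1,0,0] ![0,1,0,0] = ![0,0,0,-1] := by
    funext i; fin_cases i <;> simp [r9]
  rw [r00] at h00
  rw [r01] at h01
  rw [r10, show (![0,0,-α₁,0] : Fin 4 → ℂ) = (-α₁) • ![0,0,1,0] from by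
    funext i; fin_cases i <;> simp, map_smul, h00] at h10
  rw [r11, show (![0,0,0,-1] : Fin 4 → ℂ) = -![0,0,0,1] from by
    funext i; fin_cases i <;> simp, map_neg, h01] at h11
  have e1 := congrFun h10 2
  have e2 := congrFun h10 3
  have e3 := congrFun h11 2
  have e4 := congrFun h11 3
  simp [r9] at e1 e2 e3 e4
  have hF2 : f ![0,0,1,0] = ![0, 0,
      f ![1,0,0,0] 0 * f ![1,0,0,0] 0 - α₂ * (f ![1,0,0,0] 1 * f ![1,0,0,0] 0),
      f ![1,0,0,0] 0 * f ![1,0,0,0] 1 - f ![1,0,0,0] 1 * f ![1,0,0,0] 1] := by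
    rw [h00]; funext i; fin_cases i <;> simp [r9]
  have hF3 : f ![0,0,0,1] = ![0, 0,
      f ![1,0,0,0] 0 * f ![0,1,0,0] 0 - α₂ * (f ![1,0,0,0] 1 * f ![0,1,0,0] 0),
      f ![1,0,0,0] 0 * f ![0,1,0,0] 1 - f ![1,0,0,0] 1 * f ![0,1,0,0] 1] := by
    rw [h01]; funext i; fin_cases i <;> simp [r9]
  set A := f ![1,0,0,0] 0 with hAd
  set C := f ![1,0,0,0] 1 with hCd
  set B := f ![0,1,0,0] 0 with hBd
  set D := f ![0,1,0,0] 1 with hDd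
  -- injectivity of f on the span of e₃, e₄
  have key : ∀ x y : ℂ,
      x * (A * A - α₂ * (C * A)) + y * (A * B - α₂ * (C * B)) = 0 →
      x * (A * C - C * C) + y * (A * D - C * D) = 0 → x = 0 ∧ y = 0 := by
    intro x y k2 k3
    have h0 : f (x • ![0,0,1,0] + y • ![0,0,0,1]) = 0 := by
      rw [map_add, map_smul, map_smul, hF2, hF3]
      funext i
      fin_cases i
      · simp
      · simp
      · simp only [Pi.add_apply, Pi.smul_apply, smul_eq_mul, Pi.zero_apply]
        show x * (A * A - α₂ * (C * A)) + y * (A * B - α₂ * (C * B)) = 0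
        linear_combination k2
      · simp only [Pi.add_apply, Pi.smul_apply, smul_eq_mul, Pi.zero_apply]
        show x * (A * C - C * C) + y * (A * D - C * D) = 0
        linear_combination k3
    have h1 : (x • ![0,0,1,0] + y • ![0,0,0,1] : Fin 4 → ℂ) = 0 := by
      apply f.injective
      rw [h0, map_zero]
    constructor
    · simpa using congrFun h1 2
    · simpa using congrFun h1 3
  have hs : A - α₂ * C ≠ 0 := by
    intro hs0
    obtain ⟨hD0, hC0n⟩ := key D (-C)
      (by linear_combination (A * D - C * B) * hs0) (by ring)
    have hC0 : C = 0 := neg_eq_zero.mp hC0n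
    have hA0 : A = 0 := by linear_combination hs0 + α₂ * hC0
    obtain ⟨h10', -⟩ := key 1 0
      (by linear_combination (A - α₂ * C) * hA0) (by linear_combination C * hA0 - C * hC0)
    exact one_ne_zero h10'
  have ht : A - C ≠ 0 := by
    intro ht0
    obtain ⟨hB0, hA0n⟩ := key B (-A)
      (by ring) (by linear_combination (B * C - A * D) * ht0)
    have hA0 : A = 0 := neg_eq_zero.mp hA0n
    have hC0 : C = 0 := by linear_combination hA0 - ht0
    obtain ⟨h10', -⟩ := key 1 0
      (by linear_combination (A - α₂ * C) * hA0) (by linear_combination C * hA0 - C * hC0)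
    exact one_ne_zero h10'
  have hdet : A * D - B * C ≠ 0 := by
    intro hd0
    obtain ⟨hD0, hC0n⟩ := key D (-C)
      (by linear_combination (A - α₂ * C) * hd0) (by ring)
    have hC0 : C = 0 := neg_eq_zero.mp hC0n
    obtain ⟨hB0, hA0n⟩ := key B (-A)
      (by ring) (by linear_combination (A * B - B * C + A * D) * hC0 - A ^ 2 * hD0)
    have hA0 : A = 0 := neg_eq_zero.mp hA0n
    exact ht (by rw [hA0, hC0, sub_zero])
  by_cases hA : A = 0
  · by_cases hB : B = 0
    · exact hdet (by linear_combination D * hA - C * hB)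
    · by_cases hC : C = 0
      · exact hs (by linear_combination hA - α₂ * hC)
      · by_cases hD : D = 0
        · have t3 : B * (B - α₂ * C) = 0 := by
            linear_combination -e3 - B * hA + α₂ * B * hD
          have hB2 : B - α₂ * C = 0 := (mul_eq_zero.mp t3).resolve_left hB
          have t2 : C * (B - α₁ * C) = 0 := by
            linear_combination -e2 - α₁ * C * hA + C * hD
          have hB3 : B - α₁ * C = 0 := (mul_eq_zero.mp t2).resolve_left hC
          have hfin : (α₂ - α₁) * C = 0 := by linear_combination hB3 - hB2
          rcases mul_eq_zero.mp hfin with h' | h'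
          · exact h (by linear_combination -h')
          · exact hC h'
        · have t4 : D * (C + D - B) = 0 := by linear_combination e4 + D * hA
          have i4 : C + D - B = 0 := (mul_eq_zero.mp t4).resolve_left hD
          have t2 : C * (α₁ * C - B + D) = 0 := by linear_combination e2 + α₁ * C * hA
          have i2 : α₁ * C - B + D = 0 := (mul_eq_zero.mp t2).resolve_left hC
          have hα : (α₁ - 1) * C = 0 := by linear_combination i2 - i4
          have hα1 : α₁ = 1 := by
            rcases mul_eq_zero.mp hα with h' | h'
            · linear_combination h'
            · exact absurd h' hC
          have t3 : B * (α₂ * C + α₂ * D - B) = 0 := by linear_combination e3 + B * hA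
          have i3 : α₂ * C + α₂ * D - B = 0 := (mul_eq_zero.mp t3).resolve_left hB
          have hfin : (α₂ - 1) * (C + D) = 0 := by linear_combination i3 - i4
          rcases mul_eq_zero.mp hfin with h' | h'
          · exact h (by linear_combination hα1 - h')
          · exact hB (by linear_combination h' - i4)
  · have t1 : A * (B - α₂ * D + α₁ * A - α₁ * (α₂ * C)) = 0 := by linear_combination -e1
    have i1 : B - α₂ * D + α₁ * A - α₁ * (α₂ * C) = 0 := (mul_eq_zero.mp t1).resolve_left hA
    by_cases hB : B = 0
    · by_cases hC : C = 0
      · have hD : D ≠ 0 := fun h0 => hdet (by linear_combination A * h0 - C * hB)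
        have t4 : D * (C - A - B + D) = 0 := by linear_combination e4
        have i4 : C - A - B + D = 0 := (mul_eq_zero.mp t4).resolve_left hD
        have hfin : (α₁ - α₂) * A = 0 := by
          linear_combination i1 + α₂ * i4 + (α₂ - 1) * hB + (α₁ * α₂ - α₂) * hC
        rcases mul_eq_zero.mp hfin with h' | h'
        · exact h (by linear_combination h')
        · exact hA h'
      · by_cases hD : D = 0
        · exact hdet (by linear_combination A * hD - C * hB)
        · have t2 : C * (α₁ * C - α₁ * A - B + D) = 0 := by linear_combination e2
          have i2 : α₁ * C - α₁ * A - B + D = 0 := (mul_eq_zero.mp t2).resolve_left hC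
          have t4 : D * (C - A - B + D) = 0 := by linear_combination e4
          have i4 : C - A - B + D = 0 := (mul_eq_zero.mp t4).resolve_left hD
          have hα : (α₁ - 1) * (A - C) = 0 := by linear_combination i4 - i2
          have hα1 : α₁ = 1 := by
            rcases mul_eq_zero.mp hα with h' | h'
            · linear_combination h'
            · exact absurd h' ht
          have hfin : (1 - α₂) * A = 0 := by
            linear_combination i1 + (α₂ - 1) * hB - (A - α₂ * C) * hα1 + α₂ * i4
          rcases mul_eq_zero.mp hfin with h' | h'
          · exact h (by linear_combination hα1 + h')
          · exact hA h'
    · have t3 : B * (α₂ * C - A - B + α₂ * D) = 0 := by linear_combination e3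
      have i3 : α₂ * C - A - B + α₂ * D = 0 := (mul_eq_zero.mp t3).resolve_left hB
      have hα : (α₁ - 1) * (A - α₂ * C) = 0 := by linear_combination i1 + i3
      have hα1 : α₁ = 1 := by
        rcases mul_eq_zero.mp hα with h' | h'
        · linear_combination h'
        · exact absurd h' hs
      by_cases hC : C = 0
      · by_cases hD : D = 0
        · exact hdet (by linear_combination A * hD - B * hC)
        · have t4 : D * (C - A - B + D) = 0 := by linear_combination e4
          have i4 : C - A - B + D = 0 := (mul_eq_zero.mp t4).resolve_left hD
          have hfin : (α₂ - 1) * D = 0 := by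
            linear_combination i3 - i4 - (α₂ - 1) * hC
          rcases mul_eq_zero.mp hfin with h' | h'
          · exact h (by linear_combination hα1 - h')
          · exact hD h'
      · have t2 : C * (α₁ * C - α₁ * A - B + D) = 0 := by linear_combination e2
        have i2 : α₁ * C - α₁ * A - B + D = 0 := (mul_eq_zero.mp t2).resolve_left hC
        have hsum : (α₂ - 1) * (C + D) = 0 := by
          linear_combination i3 - i2 + (C - A) * hα1
        rcases mul_eq_zero.mp hsum with h' | h'
        · exact h (by linear_combination hα1 - h')
        · exact hdet (by linear_combination (A - C) * h' + C * i2 + C * (A - C) * hα1)
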